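/- arXiv:2412.17389 — 4 statements merged into one kernel-verified Lean document; each statement's English description precedes it below -/
import Mathlib

section
/- Let a < b be real numbers, let d be a positive integer, and let F : [a,b] × ℝ^d → ℝ be a continuous function such that for each fixed t ∈ [a,b] the function x ↦ F(t,x) is convex on ℝ^d. Then there exist a continuous function A : [a,b] → ℝ^d and a constant c₀ ∈ ℝ such that F(t,x) ≥ ⟨A(t), x⟩ + c₀ for all (t,x) ∈ [a,b] × ℝ^d, where ⟨·,·⟩ denotes the standard inner product on ℝ^d. -/
/-!
For each `t`, let `p t` minimize the `1`-strongly convex function `F t + ‖·‖² / 2`. Minimality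
gives the quadratic growth `F t (p t) + ‖p t‖² / 2 + ‖y - p t‖² / 2 ≤ F t y + ‖y‖² / 2`, which,
once expanded, says exactly that `-p t` is a subgradient of `F t` at `p t`. Adding the growth
inequalities at `s` and `t` bounds `‖p s - p t‖²` by the uniform distance between `F s` and `F t`
on a ball containing all minimizers, so `p` is continuous by Heine–Cantor. Finally a bound
`|F| ≤ M` on `[a,b] × closedBall 0 1` gives, by convexity, the minorant `F t y ≥ -M (1 + 2‖y‖)`,
which confines the minimizers to a fixed ball and makes the constant term uniform.
-/

open Set Filter Topology

section StrongConvexity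

variable {E : Type*} [NormedAddCommGroup E] [NormedSpace ℝ E] {s : Set E} {m : ℝ} {f : E → ℝ}
  {x y : E}

theorem StrongConvexOn.add_mul_norm_sub_sq_le_of_isMinOn (hf : StrongConvexOn s m f)
    (hmin : IsMinOn f s x) (hx : x ∈ s) (hy : y ∈ s) :
    f x + m / 2 * ‖y - x‖ ^ 2 ≤ f y := by
  have hsegment : ∀ a ∈ Ioo (0 : ℝ) 1, f x + (1 - a) * (m / 2 * ‖y - x‖ ^ 2) ≤ f y := by
    rintro a ⟨ha₀, ha₁⟩
    have hmem := hf.1 hy hx ha₀.le (sub_nonneg.2 ha₁.le) (add_sub_cancel a 1)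
    have hconv := hf.2 hy hx ha₀.le (sub_nonneg.2 ha₁.le) (add_sub_cancel a 1)
    have hle : f x ≤ f (a • y + (1 - a) • x) := hmin hmem
    simp only [smul_eq_mul] at hconv
    have : a * (f x + (1 - a) * (m / 2 * ‖y - x‖ ^ 2)) ≤ a * f y := by linarith
    exact le_of_mul_le_mul_left this ha₀
  have hlim : Tendsto (fun a : ℝ => f x + (1 - a) * (m / 2 * ‖y - x‖ ^ 2)) (𝓝[>] 0)
      (𝓝 (f x + m / 2 * ‖y - x‖ ^ 2)) := by
    have : Continuous fun a : ℝ => f x + (1 - a) * (m / 2 * ‖y - x‖ ^ 2) := by fun_prop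
    simpa using (this.tendsto 0).mono_left nhdsWithin_le_nhds
  exact le_of_tendsto hlim (eventually_of_mem (Ioo_mem_nhdsGT one_pos) hsegment)

end StrongConvexity

section Convex

variable {E : Type*} [NormedAddCommGroup E] [NormedSpace ℝ E] {g : E → ℝ} {M : ℝ}

theorem ConvexOn.neg_mul_le_of_abs_le_on_closedBall (hg : ConvexOn ℝ univ g)
    (hM : ∀ y, ‖y‖ ≤ 1 → |g y| ≤ M) (y : E) : -(M * (1 + 2 * ‖y‖)) ≤ g y := by
  have hM₀ := abs_le.1 (hM 0 (by simp))
  rcases eq_or_ne y 0 with rfl | hy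
  · simpa using hM₀.1
  set r := ‖y‖
  have hr : 0 < r := norm_pos_iff.2 hy
  set z : E := -r⁻¹ • y
  have hz : ‖z‖ = 1 := by
    rw [norm_smul, norm_neg, norm_inv, Real.norm_of_nonneg hr.le]
    exact inv_mul_cancel₀ hr.ne'
  -- `0` lies on the segment from `y` to the unit vector `z` opposite to it
  have hzero : (1 / (1 + r)) • y + (r / (1 + r)) • z = 0 := by
    rw [smul_smul, ← add_smul]
    convert zero_smul ℝ y
    field_simp
    ring
  have hconv := hg.2 (mem_univ y) (mem_univ z) (show 0 ≤ 1 / (1 + r) by positivity)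
    (show 0 ≤ r / (1 + r) by positivity) (by field_simp)
  rw [hzero, smul_eq_mul, smul_eq_mul] at hconv
  have hMz := (abs_le.1 (hM z hz.le)).2
  have : (1 + r) * g 0 ≤ g y + r * g z := by
    rw [div_mul_eq_mul_div, div_mul_eq_mul_div, ← add_div, le_div_iff₀ (by positivity)]
      at hconv
    linarith
  nlinarith

end Convex

section InnerProduct

open scoped InnerProductSpace

variable {E : Type*} [NormedAddCommGroup E] [InnerProductSpace ℝ E] {g : E → ℝ} {M : ℝ} {p : E}

theorem ConvexOn.strongConvexOn_add_half_norm_sq (hg : ConvexOn ℝ univ g) :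
    StrongConvexOn univ 1 fun y => g y + ‖y‖ ^ 2 / 2 := by
  refine strongConvexOn_iff_convex.2 ?_
  convert hg using 2
  ring

theorem ConvexOn.add_inner_neg_sub_le_of_isMinOn (hg : ConvexOn ℝ univ g)
    (hp : IsMinOn (fun y => g y + ‖y‖ ^ 2 / 2) univ p) (x : E) :
    g p + ⟪-p, x - p⟫_ℝ ≤ g x := by
  have := hg.strongConvexOn_add_half_norm_sq.add_mul_norm_sub_sq_le_of_isMinOn hp
    (mem_univ p) (mem_univ x)
  rw [norm_sub_sq_real] at this
  rw [inner_neg_left, inner_sub_right, real_inner_self_eq_norm_sq, real_inner_comm]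
  linarith

theorem ConvexOn.inner_neg_sub_le_of_isMinOn (hg : ConvexOn ℝ univ g)
    (hM : ∀ y, ‖y‖ ≤ 1 → |g y| ≤ M) (hp : IsMinOn (fun y => g y + ‖y‖ ^ 2 / 2) univ p)
    (x : E) : ⟪-p, x⟫_ℝ - (M + M ^ 2) ≤ g x := by
  have hsub := hg.add_inner_neg_sub_le_of_isMinOn hp x
  have hlow := hg.neg_mul_le_of_abs_le_on_closedBall hM p
  rw [inner_sub_right, inner_neg_left (𝕜 := ℝ) p p, real_inner_self_eq_norm_sq] at hsub
  nlinarith [sq_nonneg (‖p‖ - M)]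

theorem ConvexOn.exists_norm_le_isMinOn_add_half_norm_sq [ProperSpace E]
    (hg : ConvexOn ℝ univ g) (hcont : Continuous g) (hM : ∀ y, ‖y‖ ≤ 1 → |g y| ≤ M) :
    ∃ p, ‖p‖ ≤ 4 * M + 2 ∧ IsMinOn (fun y => g y + ‖y‖ ^ 2 / 2) univ p := by
  have hM₀ : 0 ≤ M := (abs_nonneg _).trans (hM 0 (by simp))
  have hlarge : ∀ y, 4 * M + 2 < ‖y‖ → M < g y + ‖y‖ ^ 2 / 2 := fun y hy => by
    nlinarith [hg.neg_mul_le_of_abs_le_on_closedBall hM y,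
      mul_pos (sub_pos.2 hy) (by linarith : (0 : ℝ) < ‖y‖)]
  have hzero : g 0 + ‖(0 : E)‖ ^ 2 / 2 ≤ M := by simpa using (abs_le.1 (hM 0 (by simp))).2
  obtain ⟨p, hp⟩ := (hcont.add ((continuous_norm.pow 2).div_const 2)).exists_forall_le' 0 <| by
    filter_upwards [(isCompact_closedBall (0 : E) (4 * M + 2)).compl_mem_cocompact] with y hy
    simp only [mem_compl_iff, Metric.mem_closedBall, dist_zero_right, not_le] at hy
    exact hzero.trans (hlarge y hy).le
  refine ⟨p, not_lt.1 fun hp_large => ?_, fun y _ => hp y⟩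
  exact (hlarge p hp_large).not_ge ((hp 0).trans hzero)

end InnerProduct

section ContinuityOfMinimizers

variable {T X : Type*} [TopologicalSpace T]

theorem IsCompact.tendstoUniformlyOn_of_continuousOn_prod [TopologicalSpace X]
    {β : Type*} [UniformSpace β] {h : T → X → β} {S : Set T} {K : Set X} {t₀ : T}
    (hK : IsCompact K) (hh : ContinuousOn ↿h (S ×ˢ K)) (ht₀ : t₀ ∈ S) :
    TendstoUniformlyOn h (h t₀) (𝓝[S] t₀) K := fun u hu => by
  obtain ⟨v, hv, hvu⟩ := hK.mem_uniformity_of_prod hh ht₀ (symm_le_uniformity hu)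
  exact eventually_of_mem hv hvu

theorem continuousWithinAt_of_add_mul_dist_sq_le [PseudoMetricSpace X] {h : T → X → ℝ}
    {p : T → X} {S : Set T} {K : Set X} {c : ℝ} {t₀ : T} (hc : 0 < c) (hpK : MapsTo p S K)
    (hgrowth : ∀ t ∈ S, ∀ y ∈ K, h t (p t) + c * dist y (p t) ^ 2 ≤ h t y) (ht₀ : t₀ ∈ S)
    (hunif : TendstoUniformlyOn h (h t₀) (𝓝[S] t₀) K) : ContinuousWithinAt p S t₀ := by
  rw [ContinuousWithinAt, Metric.tendsto_nhds]
  intro ε hε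
  filter_upwards [Metric.tendstoUniformlyOn_iff.1 hunif (c * ε ^ 2) (by positivity),
    self_mem_nhdsWithin] with t hclose ht
  have hgrowth_t := hgrowth t ht (p t₀) (hpK ht₀)
  have hgrowth_t₀ := hgrowth t₀ ht₀ (p t) (hpK ht)
  have hclose_t := hclose (p t) (hpK ht)
  have hclose_t₀ := hclose (p t₀) (hpK ht₀)
  rw [Real.dist_eq, abs_lt] at hclose_t hclose_t₀
  rw [dist_comm] at hgrowth_t
  have : c * dist (p t) (p t₀) ^ 2 < c * ε ^ 2 := by linarith
  exact lt_of_pow_lt_pow_left₀ 2 hε.le (lt_of_mul_lt_mul_left this hc.le)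

end ContinuityOfMinimizers

section AffineMinorant

open scoped InnerProductSpace

variable {T E : Type*} [TopologicalSpace T] [NormedAddCommGroup E] [InnerProductSpace ℝ E]
  [ProperSpace E]

theorem IsCompact.exists_continuousOn_affine_minorant {S : Set T} {F : T → E → ℝ}
    (hS : IsCompact S) (hF : ContinuousOn ↿F (S ×ˢ univ))
    (hconv : ∀ t ∈ S, ConvexOn ℝ univ (F t)) :
    ∃ (A : T → E) (c₀ : ℝ), ContinuousOn A S ∧ ∀ t ∈ S, ∀ x, ⟪A t, x⟫_ℝ + c₀ ≤ F t x := by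
  obtain ⟨M, hM⟩ := (hS.prod (isCompact_closedBall (0 : E) 1)).exists_bound_of_continuousOn
    (hF.mono (prod_mono subset_rfl (subset_univ _)))
  have hbound : ∀ t ∈ S, ∀ y, ‖y‖ ≤ 1 → |F t y| ≤ M := fun t ht y hy =>
    hM (t, y) ⟨ht, mem_closedBall_zero_iff.2 hy⟩
  have hslice : ∀ t ∈ S, Continuous (F t) := fun t ht =>
    hF.comp_continuous (Continuous.prodMk_right t) fun y => ⟨ht, mem_univ y⟩
  choose! p hpK hpmin using fun t ht =>
    (hconv t ht).exists_norm_le_isMinOn_add_half_norm_sq (hslice t ht) (hbound t ht)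
  have hcont : ContinuousOn p S := fun t ht => by
    refine continuousWithinAt_of_add_mul_dist_sq_le (h := fun t y => F t y + ‖y‖ ^ 2 / 2)
      (K := Metric.closedBall 0 (4 * M + 2)) (c := 1 / 2) one_half_pos
      (fun s hs => mem_closedBall_zero_iff.2 (hpK s hs)) (fun s hs y _ => ?_) ht
      ((isCompact_closedBall _ _).tendstoUniformlyOn_of_continuousOn_prod ?_ ht)
    · rw [dist_eq_norm]
      exact (hconv s hs).strongConvexOn_add_half_norm_sq.add_mul_norm_sub_sq_le_of_isMinOn
        (hpmin s hs) (mem_univ _) (mem_univ y)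
    · exact (hF.mono (prod_mono subset_rfl (subset_univ _))).add
        ((continuous_norm.comp continuous_snd).pow 2 |>.div_const 2).continuousOn
  exact ⟨-p, -(M + M ^ 2), hcont.neg, fun t ht x =>
    (hconv t ht).inner_neg_sub_le_of_isMinOn (hbound t ht) (hpmin t ht) x⟩

end AffineMinorant

theorem continuous_convex_family_affine_lower_bound_general
    (d : ℕ) (a b : ℝ)
    (F : ℝ → EuclideanSpace ℝ (Fin d) → ℝ)
    (hFcont : ContinuousOn (fun p : ℝ × EuclideanSpace ℝ (Fin d) => F p.1 p.2)
      (Set.Icc a b ×ˢ (Set.univ : Set (EuclideanSpace ℝ (Fin d)))))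
    (hFconv : ∀ t ∈ Set.Icc a b, ConvexOn ℝ Set.univ (F t)) :
    ∃ (A : ℝ → EuclideanSpace ℝ (Fin d)) (c₀ : ℝ),
      ContinuousOn A (Set.Icc a b) ∧
      ∀ t ∈ Set.Icc a b, ∀ x : EuclideanSpace ℝ (Fin d),
        (inner ℝ (A t) x : ℝ) + c₀ ≤ F t x :=
  isCompact_Icc.exists_continuousOn_affine_minorant hFcont hFconv

/-- A jointly continuous function `F` on `[a,b] × ℝ^d` that is convex in the
second variable admits a uniform affine lower bound `F(t,x) ≥ ⟨A(t),x⟩ + c₀` with `A` continuous. -/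
theorem continuous_convex_family_affine_lower_bound
    (d : ℕ) (hd : 0 < d) (a b : ℝ) (hab : a < b)
    (F : ℝ → EuclideanSpace ℝ (Fin d) → ℝ)
    (hFcont : ContinuousOn (fun p : ℝ × EuclideanSpace ℝ (Fin d) => F p.1 p.2)
      (Set.Icc a b ×ˢ (Set.univ : Set (EuclideanSpace ℝ (Fin d)))))
    (hFconv : ∀ t ∈ Set.Icc a b, ConvexOn ℝ Set.univ (F t)) :
    ∃ (A : ℝ → EuclideanSpace ℝ (Fin d)) (c₀ : ℝ),
      ContinuousOn A (Set.Icc a b) ∧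
      ∀ t ∈ Set.Icc a b, ∀ x : EuclideanSpace ℝ (Fin d),
        (inner ℝ (A t) x : ℝ) + c₀ ≤ F t x :=
  continuous_convex_family_affine_lower_bound_general d a b F hFcont hFconv
end

section
/- Fix an integer N ≥ 2 and a real number β. Let 𝕎^N = {x ∈ ℝ^N : x₁ > x₂ > … > x_N} denote the Weyl chamber, and for x ∈ 𝕎^N define h_β(x) = ∏_{1 ≤ i < j ≤ N} (x_i − x_j)^{β/2}. Then h_β is smooth on 𝕎^N and for every x ∈ 𝕎^N its Laplacian satisfies Δh_β(x) = (β(β−2)/2) · (∑_{1 ≤ i < j ≤ N} (x_i − x_j)^{−2}) · h_β(x), where Δ = ∑_{k=1}^N ∂²/∂x_k². -/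
open MeasureTheory Finset

open Finset

private lemma half_sum' {N : ℕ} (F : Fin N → Fin N → ℝ)
    (hsymm : ∀ i j, F j i = F i j) (hdiag : ∀ i, F i i = 0) :
    ∑ i, ∑ j ∈ Finset.Ioi i, F i j = (∑ i, ∑ j, F i j) / 2 := by
  have h1 := Finset.sum_sum_Ioi_add_eq_sum_sum_off_diag (f := F)
  have h2 : ∑ i, ∑ j ∈ Finset.Ioi i, (F j i + F i j)
      = 2 * ∑ i, ∑ j ∈ Finset.Ioi i, F i j := by
    simp [hsymm, Finset.sum_add_distrib, two_mul]
  have h6 : ∀ (i : Fin N) (g : Fin N → ℝ),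
      ∑ j ∈ ({i}ᶜ : Finset (Fin N)), g j = (∑ j, g j) - g i := by
    intro i g
    have := Finset.sum_compl_add_sum ({i} : Finset (Fin N)) g
    simp only [Finset.sum_singleton] at this
    linarith
  rw [h2] at h1
  have h9 : ∑ x : Fin N, ∑ y ∈ ({x}ᶜ : Finset (Fin N)), F x y = ∑ x, ∑ y, F x y := by
    refine Finset.sum_congr rfl fun x _ => ?_
    rw [h6 x (F x), hdiag, sub_zero]
  have h10 : 2 * ∑ i, ∑ j ∈ Finset.Ioi i, F i j = ∑ x, ∑ y, F x y := by
    rw [h1, ← h9]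
    refine Finset.sum_congr rfl fun x _ => ?_
    refine Finset.sum_congr ?_ fun y _ => hsymm x y
    congr 1
  linarith



private lemma cube_cancel {N : ℕ} (c : Fin N → Fin N → ℝ) (hd : ∀ i, c i i = 0)
    (hrel : ∀ k j l : Fin N, k ≠ j → k ≠ l → j ≠ l →
      c k j * c k l + c j l * c j k + c l k * c l j = 0) :
    ∑ k, (∑ j, c k j) ^ 2 = ∑ k, ∑ j, (c k j) ^ 2 := by
  classical
  set f : Fin N → Fin N → Fin N → ℝ :=
    fun k j l => if j = l then 0 else c k j * c k l with hf
  have hptw : ∀ k j l, f k j l + f j l k + f l k j = 0 := by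
    intro k j l
    by_cases hjl : j = l
    · subst hjl
      by_cases hjk : j = k
      · subst hjk; simp [hf, hd]
      · simp [hf, hjk, hd, Ne.symm hjk]
    · by_cases hkj : k = j
      · subst hkj; simp [hf, hjl, hd, Ne.symm hjl]
      · by_cases hkl : k = l
        · subst hkl; simp [hf, hjl, hd, Ne.symm hjl, hkj]
        · simp only [hf, if_neg hjl, if_neg (fun hh : l = k => hkl hh.symm),
            if_neg (fun hh : k = j => hkj hh)]
          exact hrel k j l hkj hkl hjl
  set T : ℝ := ∑ k, ∑ j, ∑ l, f k j l with hT
  have e1 : ∑ k : Fin N, ∑ j : Fin N, ∑ l : Fin N, f j l k = T := by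
    rw [Finset.sum_comm]
    exact Finset.sum_congr rfl fun j _ => Finset.sum_comm
  have e2 : ∑ k : Fin N, ∑ j : Fin N, ∑ l : Fin N, f l k j = T := by
    have hstep : ∀ k : Fin N, ∑ j : Fin N, ∑ l : Fin N, f l k j
        = ∑ l : Fin N, ∑ j : Fin N, f l k j := fun k => Finset.sum_comm
    calc ∑ k : Fin N, ∑ j : Fin N, ∑ l : Fin N, f l k j
        = ∑ k : Fin N, ∑ l : Fin N, ∑ j : Fin N, f l k j :=
          Finset.sum_congr rfl fun k _ => hstep k
      _ = T := Finset.sum_comm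
  have hT0 : T = 0 := by
    have h3 : T + T + T = 0 := by
      nth_rewrite 2 [← e1]
      nth_rewrite 2 [← e2]
      rw [hT]
      simp only [← Finset.sum_add_distrib]
      simp [hptw]
    linarith
  have hexp : ∀ k : Fin N, (∑ j, c k j) ^ 2
      = (∑ j, ∑ l, f k j l) + ∑ j, (c k j) ^ 2 := by
    intro k
    have : (∑ j, c k j) ^ 2 = ∑ j, ∑ l, c k j * c k l := by
      rw [sq, Finset.sum_mul_sum]
    rw [this, ← Finset.sum_add_distrib]
    refine Finset.sum_congr rfl fun j _ => ?_
    have : ∀ l, c k j * c k l = f k j l + if j = l then c k j * c k l else 0 := by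
      intro l; by_cases hjl : j = l <;> simp [hf, hjl]
    rw [Finset.sum_congr rfl fun l _ => this l, Finset.sum_add_distrib]
    simp [sq]
  calc ∑ k, (∑ j, c k j) ^ 2 = T + ∑ k, ∑ j, (c k j) ^ 2 := by
        rw [Finset.sum_congr rfl fun k _ => hexp k, Finset.sum_add_distrib, hT]
    _ = ∑ k, ∑ j, (c k j) ^ 2 := by rw [hT0, zero_add]



/-- On the Weyl chamber, `h_β(x) = ∏_{i<j} (x_i − x_j)^{β/2}` is smooth and
its Laplacian satisfies `Δh_β = (β(β−2)/2)·(∑_{i<j} (x_i − x_j)^{−2})·h_β`. -/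
theorem laplacian_vandermonde_power
    (N : ℕ) (hN : 2 ≤ N) (β : ℝ)
    (W : Set (Fin N → ℝ)) (hW : W = {x : Fin N → ℝ | ∀ i j : Fin N, i < j → x j < x i})
    (h : (Fin N → ℝ) → ℝ)
    (hh : ∀ x, h x = ∏ i : Fin N, ∏ j ∈ Finset.Ioi i, Real.rpow (x i - x j) (β / 2)) :
    ContDiffOn ℝ (⊤ : ℕ∞) h W ∧
    ∀ x ∈ W,
      (∑ k : Fin N, fderiv ℝ (fun y => fderiv ℝ h y (Pi.single k 1)) x (Pi.single k 1))
        = (β * (β - 2) / 2) * (∑ i : Fin N, ∑ j ∈ Finset.Ioi i, ((x i - x j) ^ 2)⁻¹) * h x := by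
  subst hW
  have hWopen : IsOpen {x : Fin N → ℝ | ∀ i j : Fin N, i < j → x j < x i} := by
    have hset : {x : Fin N → ℝ | ∀ i j : Fin N, i < j → x j < x i}
        = ⋂ i, ⋂ j, {x : Fin N → ℝ | i < j → x j < x i} := by
      ext x; simp [Set.mem_iInter]
    rw [hset]
    refine isOpen_iInter_of_finite fun i => isOpen_iInter_of_finite fun j => ?_
    by_cases hij : i < j
    · simpa [hij] using isOpen_lt (continuous_apply j) (continuous_apply i)
    · simp [hij]
  have hpos : ∀ x ∈ {x : Fin N → ℝ | ∀ i j : Fin N, i < j → x j < x i},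
      ∀ i j : Fin N, i < j → 0 < x i - x j := fun x hx i j hij => sub_pos.2 (hx i j hij)
  set g : (Fin N → ℝ) → ℝ :=
    fun y => ∑ i, ∑ j ∈ Finset.Ioi i, (β / 2) * Real.log (y i - y j) with hgdef
  have hhW : ∀ y ∈ {x : Fin N → ℝ | ∀ i j : Fin N, i < j → x j < x i},
      h y = Real.exp (g y) := by
    intro y hy
    rw [hh, hgdef]
    rw [Real.exp_sum]
    refine Finset.prod_congr rfl fun i _ => ?_
    rw [Real.exp_sum]
    refine Finset.prod_congr rfl fun j hj => ?_
    rw [show Real.rpow (y i - y j) (β/2) = (y i - y j) ^ (β/2) from rfl,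
      Real.rpow_def_of_pos (hpos y hy i j (Finset.mem_Ioi.1 hj)), mul_comm]
  have hgC : ContDiffOn ℝ (⊤ : ℕ∞) g {x : Fin N → ℝ | ∀ i j : Fin N, i < j → x j < x i} := by
    apply ContDiffOn.sum; intro i _
    apply ContDiffOn.sum; intro j hj
    refine ContDiffOn.mul contDiffOn_const ?_
    refine Real.contDiffOn_log.comp ?_ ?_
    · exact (((ContinuousLinearMap.proj (R := ℝ) (φ := fun _ : Fin N => ℝ) i).contDiff).sub
        ((ContinuousLinearMap.proj (R := ℝ) (φ := fun _ : Fin N => ℝ) j).contDiff)).contDiffOn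
    · intro y hy
      exact ne_of_gt (hpos y hy i j (Finset.mem_Ioi.1 hj))
  have hC : ContDiffOn ℝ (⊤ : ℕ∞) h {x : Fin N → ℝ | ∀ i j : Fin N, i < j → x j < x i} :=
    ContDiffOn.congr (Real.contDiff_exp.comp_contDiffOn hgC) hhW
  refine ⟨hC, ?_⟩
  set L : Fin N → Fin N → ((Fin N → ℝ) →L[ℝ] ℝ) := fun i j =>
    ContinuousLinearMap.proj (R := ℝ) (φ := fun _ : Fin N => ℝ) i
      - ContinuousLinearMap.proj (R := ℝ) (φ := fun _ : Fin N => ℝ) j with hLdef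
  have hLapp : ∀ i j (v : Fin N → ℝ), L i j v = v i - v j := fun i j v => rfl
  set G : (Fin N → ℝ) → ((Fin N → ℝ) →L[ℝ] ℝ) := fun y =>
    ∑ i, ∑ j ∈ Finset.Ioi i, ((β / 2) * (y i - y j)⁻¹) • L i j with hGdef
  have hgderiv : ∀ y ∈ {x : Fin N → ℝ | ∀ i j : Fin N, i < j → x j < x i},
      HasFDerivAt g (G y) y := by
    intro y hy
    apply HasFDerivAt.fun_sum; intro i _
    apply HasFDerivAt.fun_sum; intro j hj
    have hne : y i - y j ≠ 0 := ne_of_gt (hpos y hy i j (Finset.mem_Ioi.1 hj))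
    have h1 : HasFDerivAt (fun z : Fin N → ℝ => Real.log (z i - z j))
        ((y i - y j)⁻¹ • L i j) y := by
      have := (Real.hasDerivAt_log hne).comp_hasFDerivAt y ((L i j).hasFDerivAt)
      simpa [Function.comp_def, hLapp] using this
    have h2 := h1.const_mul (β / 2)
    simpa [smul_smul] using h2
  have hhderiv : ∀ y ∈ {x : Fin N → ℝ | ∀ i j : Fin N, i < j → x j < x i},
      HasFDerivAt h (Real.exp (g y) • G y) y := by
    intro y hy
    have he : HasFDerivAt (fun z => Real.exp (g z)) (Real.exp (g y) • G y) y :=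
      (hgderiv y hy).exp
    exact he.congr_of_eventuallyEq
      (Filter.eventuallyEq_of_mem (hWopen.mem_nhds hy) hhW)
  -- second derivative per direction, at fixed x
  intro x hx
  set u : Fin N → (Fin N → ℝ) → ℝ := fun k y =>
    ∑ i, ∑ j ∈ Finset.Ioi i,
      ((β / 2) * (y i - y j)⁻¹) * ((Pi.single k (1:ℝ) : Fin N → ℝ) i - (Pi.single k (1:ℝ) : Fin N → ℝ) j) with hudef
  set w : Fin N → ℝ := fun k =>
    ∑ i, ∑ j ∈ Finset.Ioi i,
      ((Pi.single k (1:ℝ) : Fin N → ℝ) i - (Pi.single k (1:ℝ) : Fin N → ℝ) j) *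
        ((β / 2) * ((-(((x i - x j)) ^ 2)⁻¹) *
          ((Pi.single k (1:ℝ) : Fin N → ℝ) i - (Pi.single k (1:ℝ) : Fin N → ℝ) j))) with hwdef
  have key : ∀ k : Fin N,
      fderiv ℝ (fun y => fderiv ℝ h y (Pi.single k 1)) x (Pi.single k 1)
        = h x * ((u k x) ^ 2 + w k) := by
    intro k
    set U : (Fin N → ℝ) →L[ℝ] ℝ :=
      ∑ i, ∑ j ∈ Finset.Ioi i,
        ((Pi.single k (1:ℝ) : Fin N → ℝ) i - (Pi.single k (1:ℝ) : Fin N → ℝ) j) •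
          ((β / 2) • ((-(((x i - x j)) ^ 2)⁻¹) • L i j)) with hUdef
    have hGu : ∀ y, G y (Pi.single k 1) = u k y := by
      intro y
      simp [hGdef, hudef, ContinuousLinearMap.sum_apply, ContinuousLinearMap.smul_apply,
        hLapp, smul_eq_mul]
    have hueq : ∀ y ∈ {x : Fin N → ℝ | ∀ i j : Fin N, i < j → x j < x i},
        fderiv ℝ h y (Pi.single k 1) = h y * u k y := by
      intro y hy
      rw [(hhderiv y hy).fderiv]
      rw [ContinuousLinearMap.smul_apply, hGu y, ← hhW y hy, smul_eq_mul]
    have huderiv : HasFDerivAt (u k) U x := by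
      apply HasFDerivAt.fun_sum; intro i _
      apply HasFDerivAt.fun_sum; intro j hj
      have hne : x i - x j ≠ 0 := ne_of_gt (hpos x hx i j (Finset.mem_Ioi.1 hj))
      have h1 : HasFDerivAt (fun z : Fin N → ℝ => (z i - z j)⁻¹)
          (-((((x i - x j)) ^ 2)⁻¹ • L i j)) x := by
        have := (hasDerivAt_inv hne).comp_hasFDerivAt x ((L i j).hasFDerivAt)
        simpa [Function.comp_def, hLapp, neg_smul] using this
      have h2 := (h1.const_mul (β / 2)).mul_const
        ((Pi.single k (1:ℝ) : Fin N → ℝ) i - (Pi.single k (1:ℝ) : Fin N → ℝ) j)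
      exact h2.congr_fderiv (ContinuousLinearMap.ext fun v => by
        simp only [ContinuousLinearMap.smul_apply, ContinuousLinearMap.neg_apply, smul_eq_mul]
        ring)
    have hfe : fderiv ℝ (fun y => fderiv ℝ h y (Pi.single k 1)) x
        = fderiv ℝ (fun y => h y * u k y) x :=
      Filter.EventuallyEq.fderiv_eq (Filter.eventuallyEq_of_mem (hWopen.mem_nhds hx) hueq)
    have hprod : HasFDerivAt (fun y => h y * u k y)
        (h x • U + u k x • (Real.exp (g x) • G x)) x :=
      (hhderiv x hx).mul huderiv
    rw [hfe, hprod.fderiv]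
    have hUapp : U (Pi.single k 1) = w k := by
      simp [hUdef, hwdef, ContinuousLinearMap.sum_apply, ContinuousLinearMap.smul_apply,
        hLapp, smul_eq_mul]
    simp only [ContinuousLinearMap.add_apply, ContinuousLinearMap.smul_apply, smul_eq_mul,
      hUapp, hGu x, ← hhW x hx]
    ring
  -- algebraic finish
  have hxne : ∀ i j : Fin N, i ≠ j → x i - x j ≠ 0 := by
    intro i j hij
    rcases lt_or_gt_of_ne hij with hlt | hgt
    · exact ne_of_gt (hpos x hx i j hlt)
    · have h2 := hpos x hx j i hgt
      intro hcon; rw [sub_eq_zero] at hcon; rw [hcon] at h2; linarith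
  set c : Fin N → Fin N → ℝ := fun i j => if i = j then 0 else (x i - x j)⁻¹ with hcdef
  have hcdiag : ∀ i, c i i = 0 := by intro i; simp [hcdef]
  have hanti : ∀ i j, c j i = -c i j := by
    intro i j
    by_cases hij : i = j
    · simp [hcdef, hij]
    · simp only [hcdef, if_neg (Ne.symm hij), if_neg hij]
      rw [show x j - x i = -(x i - x j) by ring, inv_neg]
  have hsq : ∀ i j, (c i j) ^ 2 = if i = j then 0 else (((x i - x j)) ^ 2)⁻¹ := by
    intro i j
    by_cases hij : i = j
    · simp [hcdef, hij]
    · simp [hcdef, if_neg hij, inv_pow]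
  have t1 : ∀ (d : Fin N → Fin N → ℝ) (k : Fin N),
      ∑ i, ∑ j, d i j * (if i = k then (1:ℝ) else 0) = ∑ j, d k j := by
    intro d k
    have hstep : ∀ i : Fin N, ∑ j, d i j * (if i = k then (1:ℝ) else 0)
        = if i = k then ∑ j, d i j else 0 := by
      intro i; by_cases hik : i = k <;> simp [hik]
    rw [Finset.sum_congr rfl fun i _ => hstep i]
    simp
  have t2 : ∀ (d : Fin N → Fin N → ℝ) (k : Fin N),
      ∑ i, ∑ j, d i j * (if j = k then (1:ℝ) else 0) = ∑ i, d i k := by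
    intro d k
    refine Finset.sum_congr rfl fun i _ => ?_
    simp [mul_ite]
  have t3 : ∀ (d : Fin N → Fin N → ℝ) (k : Fin N),
      ∑ i, ∑ j, d i j * ((if i = k then (1:ℝ) else 0) * (if j = k then (1:ℝ) else 0))
        = d k k := by
    intro d k
    have hstep : ∀ i : Fin N,
        ∑ j, d i j * ((if i = k then (1:ℝ) else 0) * (if j = k then (1:ℝ) else 0))
        = (if i = k then (1:ℝ) else 0) * d i k := by
      intro i
      by_cases hik : i = k <;> simp [hik, mul_ite, mul_comm]
    rw [Finset.sum_congr rfl fun i _ => hstep i]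
    simp
  have hA : ∀ k, u k x = (β / 2) * ∑ j, c k j := by
    intro k
    have hstep : u k x = (β / 2) * ∑ i, ∑ j ∈ Finset.Ioi i,
        c i j * ((if i = k then (1:ℝ) else 0) - (if j = k then (1:ℝ) else 0)) := by
      rw [hudef, Finset.mul_sum]
      refine Finset.sum_congr rfl fun i _ => ?_
      rw [Finset.mul_sum]
      refine Finset.sum_congr rfl fun j hj => ?_
      rw [show c i j = (x i - x j)⁻¹ from if_neg (ne_of_lt (Finset.mem_Ioi.1 hj))]
      simp only [Pi.single_apply]
      ring
    have hs : ∀ i j : Fin N,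
        c j i * ((if j = k then (1:ℝ) else 0) - (if i = k then (1:ℝ) else 0))
          = c i j * ((if i = k then (1:ℝ) else 0) - (if j = k then (1:ℝ) else 0)) := by
      intro i j; rw [hanti]; ring
    have hd : ∀ i : Fin N,
        c i i * ((if i = k then (1:ℝ) else 0) - (if i = k then (1:ℝ) else 0)) = 0 := by
      intro i; ring
    have hdob : ∑ i, ∑ j, c i j * ((if i = k then (1:ℝ) else 0) - (if j = k then (1:ℝ) else 0))
        = 2 * ∑ j, c k j := by
      simp only [mul_sub, Finset.sum_sub_distrib]
      rw [t1 c k, t2 c k]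
      have hneg : ∑ i, c i k = -∑ j, c k j := by
        rw [← Finset.sum_neg_distrib]
        exact Finset.sum_congr rfl fun i _ => hanti k i
      rw [hneg]; ring
    rw [hstep, half_sum' _ hs hd, hdob]; ring
  have hB : ∀ k, w k = -(β / 2) * ∑ j, (c k j) ^ 2 := by
    intro k
    have hexp2 : ∀ i j : Fin N,
        ((if i = k then (1:ℝ) else 0) - (if j = k then (1:ℝ) else 0)) ^ 2
          = (if i = k then (1:ℝ) else 0) + (if j = k then (1:ℝ) else 0)
            - 2 * ((if i = k then (1:ℝ) else 0) * (if j = k then (1:ℝ) else 0)) := by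
      intro i j
      by_cases h1 : i = k <;> by_cases h2 : j = k <;> simp [h1, h2] <;> ring
    have hstep : w k = -(β / 2) * ∑ i, ∑ j ∈ Finset.Ioi i,
        (c i j) ^ 2 * ((if i = k then (1:ℝ) else 0) - (if j = k then (1:ℝ) else 0)) ^ 2 := by
      rw [hwdef, Finset.mul_sum]
      refine Finset.sum_congr rfl fun i _ => ?_
      rw [Finset.mul_sum]
      refine Finset.sum_congr rfl fun j hj => ?_
      rw [hsq i j, if_neg (ne_of_lt (Finset.mem_Ioi.1 hj))]
      simp only [Pi.single_apply]
      ring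
    have hs : ∀ i j : Fin N,
        (c j i) ^ 2 * ((if j = k then (1:ℝ) else 0) - (if i = k then (1:ℝ) else 0)) ^ 2
          = (c i j) ^ 2 * ((if i = k then (1:ℝ) else 0) - (if j = k then (1:ℝ) else 0)) ^ 2 := by
      intro i j; rw [hanti]; ring
    have hd : ∀ i : Fin N,
        (c i i) ^ 2 * ((if i = k then (1:ℝ) else 0) - (if i = k then (1:ℝ) else 0)) ^ 2 = 0 := by
      intro i; ring
    have hdob : ∑ i, ∑ j, (c i j) ^ 2 *
        ((if i = k then (1:ℝ) else 0) - (if j = k then (1:ℝ) else 0)) ^ 2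
          = 2 * ∑ j, (c k j) ^ 2 := by
      have hrw : ∀ i j : Fin N, (c i j) ^ 2 *
          ((if i = k then (1:ℝ) else 0) - (if j = k then (1:ℝ) else 0)) ^ 2
          = (c i j) ^ 2 * (if i = k then (1:ℝ) else 0)
            + (c i j) ^ 2 * (if j = k then (1:ℝ) else 0)
            - 2 * ((c i j) ^ 2 * ((if i = k then (1:ℝ) else 0) * (if j = k then (1:ℝ) else 0))) := by
        intro i j; rw [hexp2 i j]; ring
      simp only [hrw, Finset.sum_sub_distrib, Finset.sum_add_distrib, ← Finset.mul_sum]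
      rw [t1 (fun i j => (c i j) ^ 2) k, t2 (fun i j => (c i j) ^ 2) k,
        t3 (fun i j => (c i j) ^ 2) k]
      have hsym : ∑ i, (c i k) ^ 2 = ∑ j, (c k j) ^ 2 :=
        Finset.sum_congr rfl fun i _ => by rw [hanti k i]; ring
      rw [hsym, hcdiag]; ring
    rw [hstep, half_sum' _ hs hd, hdob]; ring
  have hrel : ∀ k j l : Fin N, k ≠ j → k ≠ l → j ≠ l →
      c k j * c k l + c j l * c j k + c l k * c l j = 0 := by
    intro k j l hkj hkl hjl
    have d1 : x k - x j ≠ 0 := hxne k j hkj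
    have d2 : x k - x l ≠ 0 := hxne k l hkl
    have d3 : x j - x l ≠ 0 := hxne j l hjl
    simp only [hcdef, if_neg hkj, if_neg hkl, if_neg hjl, if_neg (Ne.symm hkj),
      if_neg (Ne.symm hkl), if_neg (Ne.symm hjl)]
    rw [show x j - x k = -(x k - x j) by ring, show x l - x k = -(x k - x l) by ring,
      show x l - x j = -(x j - x l) by ring, inv_neg, inv_neg, inv_neg]
    have hA' : (x k - x j) * (x k - x j)⁻¹ = 1 := mul_inv_cancel₀ d1
    have hB' : (x k - x l) * (x k - x l)⁻¹ = 1 := mul_inv_cancel₀ d2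
    have hD' : (x j - x l) * (x j - x l)⁻¹ = 1 := mul_inv_cancel₀ d3
    linear_combination (-((x k - x j)⁻¹ * (x k - x l)⁻¹)) * hD'
      + ((x k - x j)⁻¹ * (x j - x l)⁻¹) * hB'
      + (-((x k - x l)⁻¹ * (x j - x l)⁻¹)) * hA'
  have hRHS : ∑ i, ∑ j ∈ Finset.Ioi i, (((x i - x j)) ^ 2)⁻¹
      = (∑ i, ∑ j, (c i j) ^ 2) / 2 := by
    have hs : ∀ i j : Fin N, (c j i) ^ 2 = (c i j) ^ 2 := fun i j => by rw [hanti]; ring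
    have hd : ∀ i : Fin N, (c i i) ^ 2 = 0 := fun i => by rw [hcdiag]; ring
    rw [← half_sum' (fun i j => (c i j) ^ 2) hs hd]
    refine Finset.sum_congr rfl fun i _ => Finset.sum_congr rfl fun j hj => ?_
    rw [hsq i j, if_neg (ne_of_lt (Finset.mem_Ioi.1 hj))]
  calc ∑ k : Fin N, fderiv ℝ (fun y => fderiv ℝ h y (Pi.single k 1)) x (Pi.single k 1)
      = ∑ k : Fin N, h x * ((u k x) ^ 2 + w k) := Finset.sum_congr rfl fun k _ => key k
    _ = h x * ∑ k : Fin N, (((β / 2) * ∑ j, c k j) ^ 2 + (-(β / 2) * ∑ j, (c k j) ^ 2)) := by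
        rw [Finset.mul_sum]
        exact Finset.sum_congr rfl fun k _ => by rw [hA k, hB k]
    _ = h x * ((β / 2) ^ 2 * (∑ k : Fin N, (∑ j, c k j) ^ 2)
          - (β / 2) * ∑ k : Fin N, ∑ j, (c k j) ^ 2) := by
        rw [Finset.sum_add_distrib]
        have e1 : ∑ k : Fin N, ((β / 2) * ∑ j, c k j) ^ 2
            = (β / 2) ^ 2 * ∑ k : Fin N, (∑ j, c k j) ^ 2 := by
          rw [Finset.mul_sum]
          exact Finset.sum_congr rfl fun k _ => by ring
        have e2 : ∑ k : Fin N, (-(β / 2) * ∑ j, (c k j) ^ 2)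
            = -((β / 2) * ∑ k : Fin N, ∑ j, (c k j) ^ 2) := by
          rw [Finset.mul_sum, ← Finset.sum_neg_distrib]
          exact Finset.sum_congr rfl fun k _ => by ring
        rw [e1, e2]; ring
    _ = h x * (((β / 2) ^ 2 - (β / 2)) * (∑ k : Fin N, ∑ j, (c k j) ^ 2)) := by
        rw [cube_cancel c hcdiag hrel]; ring
    _ = (β * (β - 2) / 2) * (∑ i : Fin N, ∑ j ∈ Finset.Ioi i, ((x i - x j) ^ 2)⁻¹) * h x := by
        rw [hRHS]; ring
end

section
/- Let Y be a real random variable on a probability space such that E|Y|^p ≤ N_p for every real p ≥ 1, where N_p = E|𝒩|^p is the p-th absolute moment of a standard normal random variable 𝒩. Then for every a ∈ [0, 1/2): E[exp(aY²)] ≤ (1 − 2a)^{−1/2}. -/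
open MeasureTheory ProbabilityTheory Real
open scoped Nat NNReal

/-! Expanding `exp (a Y²) = ∑ aⁿ Y²ⁿ / n!` (all terms are nonnegative since `a ≥ 0`, so the
series may be integrated termwise) reduces the claim to the even moments `E Y²ⁿ ≤ E 𝒩²ⁿ`, which
are hypotheses. Summing back gives `E exp (a 𝒩²)`, a Gaussian integral equal to
`(1 - 2a)^(-1/2)`. -/

lemma ofReal_exp_mul_sq_eq_tsum {a : ℝ} (ha : 0 ≤ a) (x : ℝ) :
    ENNReal.ofReal (exp (a * x ^ 2))
      = ∑' n : ℕ, ENNReal.ofReal (a ^ n / n !) * ENNReal.ofReal ((x ^ 2) ^ n) := by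
  rw [exp_eq_exp_ℝ, NormedSpace.exp_eq_tsum_div,
    ENNReal.ofReal_tsum_of_nonneg (fun n => by positivity) (summable_pow_div_factorial _)]
  congr 1 with n
  rw [← ENNReal.ofReal_mul (by positivity), mul_pow, mul_div_right_comm]

lemma lintegral_exp_mul_sq_eq_tsum {α : Type*} [MeasurableSpace α] (μ : Measure α)
    {X : α → ℝ} (hX : AEMeasurable X μ) {a : ℝ} (ha : 0 ≤ a) :
    ∫⁻ x, ENNReal.ofReal (exp (a * X x ^ 2)) ∂μ
      = ∑' n : ℕ, ENNReal.ofReal (a ^ n / n !) * ∫⁻ x, ENNReal.ofReal ((X x ^ 2) ^ n) ∂μ := by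
  have hmeas (n : ℕ) : AEMeasurable (fun x => ENNReal.ofReal ((X x ^ 2) ^ n)) μ := by fun_prop
  simp_rw [ofReal_exp_mul_sq_eq_tsum ha]
  rw [lintegral_tsum fun n => (hmeas n).const_mul _]
  congr 1 with n
  rw [lintegral_const_mul'' _ (hmeas n)]

lemma lintegral_exp_mul_sq_le_of_lintegral_sq_pow_le {α β : Type*} [MeasurableSpace α]
    [MeasurableSpace β] {μ : Measure α} {ν : Measure β} {X : α → ℝ} {Z : β → ℝ}
    (hX : AEMeasurable X μ) (hZ : AEMeasurable Z ν)
    (h : ∀ n : ℕ, ∫⁻ x, ENNReal.ofReal ((X x ^ 2) ^ n) ∂μ ≤ ∫⁻ y, ENNReal.ofReal ((Z y ^ 2) ^ n) ∂ν)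
    {a : ℝ} (ha : 0 ≤ a) :
    ∫⁻ x, ENNReal.ofReal (exp (a * X x ^ 2)) ∂μ ≤ ∫⁻ y, ENNReal.ofReal (exp (a * Z y ^ 2)) ∂ν := by
  rw [lintegral_exp_mul_sq_eq_tsum μ hX ha, lintegral_exp_mul_sq_eq_tsum ν hZ ha]
  exact ENNReal.tsum_le_tsum fun n => mul_le_mul_right (h n) _

lemma ofReal_integral_le_lintegral_ofReal {α : Type*} [MeasurableSpace α] {μ : Measure α}
    {f : α → ℝ} (hf : 0 ≤ᵐ[μ] f) :
    ENNReal.ofReal (∫ x, f x ∂μ) ≤ ∫⁻ x, ENNReal.ofReal (f x) ∂μ := by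
  by_cases hfi : Integrable f μ
  · exact (ofReal_integral_eq_lintegral_ofReal hfi hf).le
  · simp [integral_undef hfi]

lemma abs_rpow_two_mul_natCast (x : ℝ) (n : ℕ) : |x| ^ (2 * (n : ℝ)) = (x ^ 2) ^ n := by
  rw [← sq_abs, ← pow_mul, ← rpow_natCast]
  push_cast
  ring_nf

lemma lintegral_sq_pow_le_of_lintegral_abs_rpow_le {Ω : Type*} [MeasurableSpace Ω]
    {P : Measure Ω} [IsProbabilityMeasure P] {ν : Measure ℝ} [IsProbabilityMeasure ν] {Y : Ω → ℝ}
    (hmom : ∀ p : ℝ, 1 ≤ p →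
      ∫⁻ ω, ENNReal.ofReal (|Y ω| ^ p) ∂P ≤ ENNReal.ofReal (∫ t, |t| ^ p ∂ν)) (n : ℕ) :
    ∫⁻ ω, ENNReal.ofReal ((Y ω ^ 2) ^ n) ∂P ≤ ∫⁻ t, ENNReal.ofReal ((t ^ 2) ^ n) ∂ν := by
  rcases n.eq_zero_or_pos with rfl | hn
  -- `hmom` does not reach `p = 0`; there both sides are total masses, equal to `1`.
  · simp
  have hp : (1 : ℝ) ≤ 2 * n := by exact_mod_cast (by omega : 1 ≤ 2 * n)
  calc ∫⁻ ω, ENNReal.ofReal ((Y ω ^ 2) ^ n) ∂P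
      = ∫⁻ ω, ENNReal.ofReal (|Y ω| ^ (2 * (n : ℝ))) ∂P := by simp_rw [abs_rpow_two_mul_natCast]
    _ ≤ ENNReal.ofReal (∫ t, |t| ^ (2 * (n : ℝ)) ∂ν) := hmom _ hp
    _ ≤ ∫⁻ t, ENNReal.ofReal ((t ^ 2) ^ n) ∂ν := by
      simp_rw [abs_rpow_two_mul_natCast]
      exact ofReal_integral_le_lintegral_ofReal (ae_of_all _ fun t => by positivity)

lemma lintegral_exp_mul_sq_gaussianReal {v : ℝ≥0} {a : ℝ} (ha : a * v < 1 / 2) :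
    ∫⁻ t, ENNReal.ofReal (exp (a * t ^ 2)) ∂gaussianReal 0 v
      = ENNReal.ofReal ((1 - 2 * a * v) ^ (-(1 : ℝ) / 2)) := by
  rcases eq_or_ne v 0 with rfl | hv
  · simp [gaussianReal_zero_var]
  have hv' : (0 : ℝ) < v := by positivity
  have hb : 0 < 1 / (2 * v) - a := sub_pos.2 <| by
    rw [lt_div_iff₀ (by positivity)]; linarith
  have hc : 0 < 1 - 2 * a * v := by linarith
  have hdens (t : ℝ) : gaussianPDF 0 v t * ENNReal.ofReal (exp (a * t ^ 2))
      = ENNReal.ofReal ((√(2 * π * v))⁻¹ * exp (-(1 / (2 * v) - a) * t ^ 2)) := by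
    rw [gaussianPDF, ← ENNReal.ofReal_mul (gaussianPDFReal_nonneg 0 v t), gaussianPDFReal,
      mul_assoc, ← exp_add]
    congr 3
    field_simp
    ring
  rw [gaussianReal_of_var_ne_zero 0 hv, lintegral_withDensity_eq_lintegral_mul _
    (measurable_gaussianPDF 0 v) (by fun_prop)]
  simp only [Pi.mul_apply, hdens]
  rw [← ofReal_integral_eq_lintegral_ofReal ((integrable_exp_neg_mul_sq hb).const_mul _)
    (ae_of_all _ fun t => by positivity), integral_const_mul, integral_gaussian]
  congr 1
  rw [show π / (1 / (2 * v) - a) = 2 * π * v / (1 - 2 * a * v) by field_simp,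
    sqrt_div' _ hc.le, show -(1 : ℝ) / 2 = -(1 / 2) by ring, rpow_neg hc.le, ← sqrt_eq_rpow]
  have : √(2 * π * v) ≠ 0 := by positivity
  field_simp

/-- If a real random variable `Y` satisfies `E|Y|^p ≤ N_p` for all `p ≥ 1`,
where `N_p` is the `p`-th absolute moment of a standard normal, then
`E[exp(aY²)] ≤ (1 − 2a)^{−1/2}` for all `a ∈ [0, 1/2)`. -/
theorem subgaussian_mgf_from_normal_moments
    {Ω : Type*} [MeasurableSpace Ω] (P : Measure Ω) [IsProbabilityMeasure P]
    (Y : Ω → ℝ) (hY : Measurable Y)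
    (hmom : ∀ p : ℝ, 1 ≤ p →
      ∫⁻ ω, ENNReal.ofReal (|Y ω| ^ p) ∂P
        ≤ ENNReal.ofReal (∫ t, |t| ^ p ∂(gaussianReal 0 1))) :
    ∀ a : ℝ, 0 ≤ a → a < 1 / 2 →
      ∫⁻ ω, ENNReal.ofReal (Real.exp (a * (Y ω) ^ 2)) ∂P
        ≤ ENNReal.ofReal ((1 - 2 * a) ^ (-(1 : ℝ) / 2)) := by
  intro a ha ha'
  calc ∫⁻ ω, ENNReal.ofReal (exp (a * Y ω ^ 2)) ∂P
      ≤ ∫⁻ t, ENNReal.ofReal (exp (a * t ^ 2)) ∂gaussianReal 0 1 :=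
        lintegral_exp_mul_sq_le_of_lintegral_sq_pow_le (Z := id) hY.aemeasurable aemeasurable_id
          (lintegral_sq_pow_le_of_lintegral_abs_rpow_le hmom) ha
    _ = ENNReal.ofReal ((1 - 2 * a) ^ (-(1 : ℝ) / 2)) := by
        simpa using lintegral_exp_mul_sq_gaussianReal (v := 1) (by simpa using ha')
end

section
/- There exist universal constants C₁, C₂ > 0 such that the following holds. Let a < b be real numbers and let Z be a random continuous function on [a,b] (a measurable map from a probability space to C([a,b],ℝ) with the uniform topology) such that for all s, t ∈ [a,b] and all K ≥ 1: P(|Z(t) − Z(s)| > K|t − s|^{1/2}) ≤ √e · K · e^{−K²/2}. Then for every K ≥ 0: P( sup_{t,s ∈ [a,b], t ≠ s} |Z(t) − Z(s)| / √(|t − s| · log(2(b − a)/|t − s|)) > K ) ≤ C₁ e^{−C₂ K²}. -/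
/-!
Dyadic chaining. Write `K = 54 c` and `hₙ = (b - a) / 2ⁿ`. If at every level `n` each of the `2ⁿ`
consecutive increments of `Z` on the grid of mesh `hₙ` is at most `c √((n + 1) hₙ)`, then for
`hₙ₊₁ < t - s ≤ hₙ` one approximates `s` and `t` from below by dyadic points of finer and finer
levels; since the scales `√((n + 1) hₙ)` decay geometrically, telescoping gives
`|Z t - Z s| ≤ 54 c √(|t - s| log (2 (b - a) / |t - s|))`. The tail hypothesis with
`Kₙ = c √(n + 1) ≥ 1` makes the union bound over all these increments cost
`∑ₙ 2ⁿ √e Kₙ e^{-Kₙ²/2} ≤ e² e^{-c²/8}` once `c ≥ 4`, and for `c < 4` that bound exceeds `1`.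
-/

open MeasureTheory Filter Topology Finset Real

lemma Nat.floor_two_mul_eq_or {α : Type*} [Field α] [LinearOrder α] [IsStrictOrderedRing α]
    [FloorSemiring α] {x : α} (hx : 0 ≤ x) :
    ⌊2 * x⌋₊ = 2 * ⌊x⌋₊ ∨ ⌊2 * x⌋₊ = 2 * ⌊x⌋₊ + 1 := by
  have hlow : 2 * ⌊x⌋₊ ≤ ⌊2 * x⌋₊ := by
    apply Nat.le_floor
    have := Nat.floor_le hx
    push_cast
    linarith
  have hhigh : ⌊2 * x⌋₊ < 2 * ⌊x⌋₊ + 2 := by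
    apply (Nat.floor_lt (by positivity)).2
    have := Nat.lt_floor_add_one x
    push_cast
    linarith
  omega

noncomputable def dyadicPoint (a b : ℝ) (n k : ℕ) : ℝ := a + k * ((b - a) / 2 ^ n)

noncomputable def dyadicIndex (a b : ℝ) (n : ℕ) (t : ℝ) : ℕ := ⌊(t - a) / ((b - a) / 2 ^ n)⌋₊

noncomputable def dyadicApprox (a b : ℝ) (n : ℕ) (t : ℝ) : ℝ :=
  dyadicPoint a b n (dyadicIndex a b n t)

section Dyadic

variable {a b s t : ℝ} {n k : ℕ}

lemma dyadicPoint_succ_sub (a b : ℝ) (n k : ℕ) :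
    dyadicPoint a b n (k + 1) - dyadicPoint a b n k = (b - a) / 2 ^ n := by
  simp only [dyadicPoint]; push_cast; ring

lemma dyadicPoint_succ_two_mul (a b : ℝ) (n k : ℕ) :
    dyadicPoint a b (n + 1) (2 * k) = dyadicPoint a b n k := by
  simp only [dyadicPoint]; push_cast; rw [pow_succ]; field_simp

lemma dyadicPoint_mem_Icc (hab : a ≤ b) (hk : k ≤ 2 ^ n) : dyadicPoint a b n k ∈ Set.Icc a b := by
  have hh : 0 ≤ (b - a) / 2 ^ n := by have := sub_nonneg.2 hab; positivity
  have hk' : (k : ℝ) * ((b - a) / 2 ^ n) ≤ 2 ^ n * ((b - a) / 2 ^ n) :=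
    mul_le_mul_of_nonneg_right (by exact_mod_cast hk) hh
  rw [mul_div_cancel₀ _ (by positivity)] at hk'
  exact ⟨le_add_of_nonneg_right (by positivity), by rw [dyadicPoint]; linarith⟩

lemma dyadicApprox_le (hab : a < b) (ht : a ≤ t) : dyadicApprox a b n t ≤ t := by
  have hh : 0 < (b - a) / 2 ^ n := div_pos (sub_pos.2 hab) (pow_pos two_pos n)
  have := Nat.floor_le (div_nonneg (sub_nonneg.2 ht) hh.le)
  rw [le_div_iff₀ hh] at this
  rw [dyadicApprox, dyadicPoint, dyadicIndex]; linarith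

lemma lt_dyadicApprox_add (hab : a < b) : t < dyadicApprox a b n t + (b - a) / 2 ^ n := by
  have hh : 0 < (b - a) / 2 ^ n := div_pos (sub_pos.2 hab) (pow_pos two_pos n)
  have := Nat.lt_floor_add_one ((t - a) / ((b - a) / 2 ^ n))
  rw [div_lt_iff₀ hh] at this
  rw [dyadicApprox, dyadicPoint, dyadicIndex]; linarith

lemma dyadicIndex_le_pow (hab : a < b) (ht : t ≤ b) : dyadicIndex a b n t ≤ 2 ^ n := by
  have hh : 0 < (b - a) / 2 ^ n := div_pos (sub_pos.2 hab) (pow_pos two_pos n)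
  apply Nat.floor_le_of_le
  rw [div_le_iff₀ hh, Nat.cast_pow, Nat.cast_ofNat, mul_div_cancel₀ _ (by positivity)]
  linarith

lemma dyadicApprox_mem_Icc (hab : a < b) (ht : t ∈ Set.Icc a b) :
    dyadicApprox a b n t ∈ Set.Icc a b :=
  dyadicPoint_mem_Icc hab.le (dyadicIndex_le_pow hab ht.2)

lemma dyadicIndex_succ (hab : a < b) (ht : a ≤ t) :
    dyadicIndex a b (n + 1) t = 2 * dyadicIndex a b n t ∨
      dyadicIndex a b (n + 1) t = 2 * dyadicIndex a b n t + 1 := by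
  have hh : 0 < (b - a) / 2 ^ n := div_pos (sub_pos.2 hab) (pow_pos two_pos n)
  have h2 : (t - a) / ((b - a) / 2 ^ (n + 1)) = 2 * ((t - a) / ((b - a) / 2 ^ n)) := by
    rw [pow_succ]; field_simp
  simp only [dyadicIndex, h2]
  exact Nat.floor_two_mul_eq_or (div_nonneg (sub_nonneg.2 ht) hh.le)

lemma tendsto_dyadicApprox (hab : a < b) (ht : a ≤ t) :
    Tendsto (fun n ↦ dyadicApprox a b n t) atTop (𝓝 t) := by
  have hmesh : Tendsto (fun n : ℕ ↦ (b - a) / 2 ^ n) atTop (𝓝 0) := by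
    simpa [div_eq_mul_inv, inv_pow] using
      (tendsto_pow_atTop_nhds_zero_of_lt_one (by norm_num : (0 : ℝ) ≤ 2⁻¹)
        (by norm_num)).const_mul (b - a)
  refine tendsto_of_tendsto_of_tendsto_of_le_of_le (by simpa using tendsto_const_nhds.sub hmesh)
    tendsto_const_nhds (fun n ↦ ?_) (fun n ↦ dyadicApprox_le hab ht)
  linarith [lt_dyadicApprox_add (n := n) hab (t := t)]

lemma dyadicIndex_le_succ_of_sub_le (hab : a < b) (hst : t - s ≤ (b - a) / 2 ^ n) :
    dyadicIndex a b n t ≤ dyadicIndex a b n s + 1 := by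
  have hh : 0 < (b - a) / 2 ^ n := div_pos (sub_pos.2 hab) (pow_pos two_pos n)
  have hlt : dyadicIndex a b n t < dyadicIndex a b n s + 2 := by
    refine (Nat.floor_lt' (by omega)).2 ?_
    have hs := Nat.lt_floor_add_one ((s - a) / ((b - a) / 2 ^ n))
    have : (t - a) / ((b - a) / 2 ^ n) ≤ (s - a) / ((b - a) / 2 ^ n) + 1 := by
      rw [div_add_one hh.ne', div_le_div_iff_of_pos_right hh]; linarith
    push_cast [dyadicIndex]
    linarith
  omega

lemma dyadicIndex_mono (hab : a < b) (hst : s ≤ t) : dyadicIndex a b n s ≤ dyadicIndex a b n t :=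
  Nat.floor_le_floor (div_le_div_of_nonneg_right (by linarith) (div_pos (sub_pos.2 hab)
    (pow_pos two_pos n)).le)

end Dyadic

section Chaining

variable {a b s t : ℝ} {f : ℝ → ℝ} {ε : ℕ → ℝ}

lemma abs_sub_dyadicApprox_le (hab : a < b) (hf : ContinuousOn f (Set.Icc a b))
    (H : ∀ m, ∀ k < 2 ^ m, |f (dyadicPoint a b m (k + 1)) - f (dyadicPoint a b m k)| ≤ ε m)
    (ht : t ∈ Set.Icc a b) (n : ℕ) {S : ℝ} (hS : ∀ J, ∑ i ∈ range J, ε (n + i + 1) ≤ S) :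
    |f t - f (dyadicApprox a b n t)| ≤ S := by
  have hstep (m : ℕ) :
      dist (f (dyadicApprox a b m t)) (f (dyadicApprox a b (m + 1) t)) ≤ ε (m + 1) := by
    rw [Real.dist_eq, abs_sub_comm, dyadicApprox, dyadicApprox]
    rcases dyadicIndex_succ (n := m) hab ht.1 with h | h
    · rw [h, dyadicPoint_succ_two_mul, sub_self, abs_zero]
      exact (abs_nonneg _).trans (H (m + 1) 0 (by positivity))
    · rw [h, ← dyadicPoint_succ_two_mul a b m]
      exact H (m + 1) _ (by have := dyadicIndex_le_pow (n := m + 1) hab ht.2; omega)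
  have hchain (J : ℕ) : dist (f (dyadicApprox a b n t)) (f (dyadicApprox a b (n + J) t)) ≤ S :=
    (dist_le_range_sum_of_dist_le (f := fun i ↦ f (dyadicApprox a b (n + i) t)) J
      fun {i} _ ↦ hstep (n + i)).trans (hS J)
  have hlim : Tendsto (fun J ↦ f (dyadicApprox a b (n + J) t)) atTop (𝓝 (f t)) := by
    refine (hf t ht).tendsto.comp (tendsto_nhdsWithin_iff.2 ⟨?_, .of_forall fun J ↦
      dyadicApprox_mem_Icc hab ht⟩)
    exact (tendsto_dyadicApprox hab ht.1).comp
      (tendsto_atTop_mono (fun J ↦ Nat.le_add_left J n) tendsto_id)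
  rw [abs_sub_comm, ← Real.dist_eq]
  exact le_of_tendsto (tendsto_const_nhds.dist hlim) (.of_forall hchain)

lemma abs_dyadicApprox_sub_dyadicApprox_le (hab : a < b)
    (H : ∀ m, ∀ k < 2 ^ m, |f (dyadicPoint a b m (k + 1)) - f (dyadicPoint a b m k)| ≤ ε m)
    {n : ℕ} (ht : t ≤ b) (hst : s ≤ t) (hts : t - s ≤ (b - a) / 2 ^ n) :
    |f (dyadicApprox a b n t) - f (dyadicApprox a b n s)| ≤ ε n := by
  have h₁ := dyadicIndex_mono (n := n) hab hst
  have h₂ := dyadicIndex_le_succ_of_sub_le hab hts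
  rw [dyadicApprox, dyadicApprox]
  obtain h | h : dyadicIndex a b n t = dyadicIndex a b n s ∨
      dyadicIndex a b n t = dyadicIndex a b n s + 1 := by omega
  · rw [h, sub_self, abs_zero]
    exact (abs_nonneg _).trans (H n 0 (by positivity))
  · rw [h]
    exact H n _ (by have := dyadicIndex_le_pow (n := n) hab ht; omega)

end Chaining

noncomputable def levyScale (L : ℝ) (n : ℕ) : ℝ := √((n + 1) * (L / 2 ^ n))

section LevyScale

variable {L : ℝ}

lemma levyScale_add_le (hL : 0 ≤ L) (n j : ℕ) :
    levyScale L (n + j) ≤ (j + 1) * (√2)⁻¹ ^ j * levyScale L n := by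
  have hq : ((√2)⁻¹ ^ j) ^ 2 = (2 ^ j)⁻¹ := by
    rw [← pow_mul, mul_comm, pow_mul, inv_pow, Real.sq_sqrt zero_le_two, inv_pow]
  have hcount : ((n + j : ℕ) + 1 : ℝ) ≤ (j + 1) ^ 2 * (n + 1) := by
    have hj : (0 : ℝ) ≤ j := Nat.cast_nonneg j
    have hn : (0 : ℝ) ≤ n := Nat.cast_nonneg n
    push_cast
    nlinarith [mul_nonneg (mul_nonneg hj hj) hn, mul_nonneg hj hn]
  rw [levyScale, levyScale, ← Real.sqrt_sq (by positivity : (0 : ℝ) ≤ (j + 1) * (√2)⁻¹ ^ j),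
    ← Real.sqrt_mul (sq_nonneg _)]
  apply Real.sqrt_le_sqrt
  calc ((n + j : ℕ) + 1 : ℝ) * (L / 2 ^ (n + j))
      = ((n + j : ℕ) + 1 : ℝ) * (L / 2 ^ n / 2 ^ j) := by rw [pow_add, div_div]
    _ ≤ (j + 1) ^ 2 * (n + 1) * (L / 2 ^ n / 2 ^ j) :=
        mul_le_mul_of_nonneg_right hcount (by positivity)
    _ = ((j + 1) * (√2)⁻¹ ^ j) ^ 2 * ((n + 1) * (L / 2 ^ n)) := by
        rw [mul_pow, hq]; ring

lemma sum_range_succ_mul_inv_sqrt_two_pow_le (J : ℕ) :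
    ∑ j ∈ range J, ((j : ℝ) + 1) * (√2)⁻¹ ^ j ≤ 13 := by
  have hq : (√2)⁻¹ ≤ 5 / 7 := by
    rw [inv_le_comm₀ (by positivity) (by norm_num), Real.le_sqrt (by norm_num) (by norm_num)]
    norm_num
  have hsum := hasSum_choose_mul_geometric_of_norm_lt_one 1 (r := (√2)⁻¹)
    (by rw [Real.norm_of_nonneg (by positivity)]; linarith)
  simp only [Nat.choose_one_right, Nat.cast_add, Nat.cast_one] at hsum
  calc ∑ j ∈ range J, ((j : ℝ) + 1) * (√2)⁻¹ ^ j ≤ 1 / (1 - (√2)⁻¹) ^ (1 + 1) :=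
        sum_le_hasSum (range J) (fun j _ ↦ by positivity) hsum
    _ ≤ 13 := by
        rw [div_le_iff₀ (by nlinarith)]
        nlinarith

lemma sum_levyScale_le (hL : 0 ≤ L) (n J : ℕ) :
    ∑ i ∈ range J, levyScale L (n + i + 1) ≤ 13 * levyScale L n := by
  calc ∑ i ∈ range J, levyScale L (n + i + 1)
      ≤ ∑ i ∈ range J, (((i + 1 : ℕ) : ℝ) + 1) * (√2)⁻¹ ^ (i + 1) * levyScale L n :=
        sum_le_sum fun i _ ↦ levyScale_add_le hL n (i + 1)
    _ ≤ ∑ j ∈ range (J + 1), ((j : ℝ) + 1) * (√2)⁻¹ ^ j * levyScale L n := by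
        rw [sum_range_succ' _ J]
        exact le_add_of_nonneg_right (mul_nonneg (by positivity) (Real.sqrt_nonneg _))
    _ ≤ 13 * levyScale L n := by
        rw [← sum_mul]
        exact mul_le_mul_of_nonneg_right (sum_range_succ_mul_inv_sqrt_two_pow_le _)
          (Real.sqrt_nonneg _)

lemma levyScale_le {δ : ℝ} {n : ℕ} (hδ : 0 < δ) (h₁ : δ ≤ L / 2 ^ n) (h₂ : L / 2 ^ n ≤ 2 * δ) :
    levyScale L n ≤ 2 * √(δ * log (2 * L / δ)) := by
  have hlog : (n + 1) * log 2 ≤ log (2 * L / δ) := by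
    rw [← Nat.cast_succ, ← Real.log_pow]
    refine Real.log_le_log (by positivity) ?_
    rw [le_div_iff₀ hδ, pow_succ]
    rw [le_div_iff₀ (by positivity)] at h₁
    linarith
  have hlog2 : 1 / 2 ≤ log 2 := by linarith [Real.log_two_gt_d9]
  have hn : ((n : ℝ) + 1) ≤ 2 * log (2 * L / δ) := by
    nlinarith [(Nat.cast_nonneg n : (0 : ℝ) ≤ n)]
  have hsq : (n + 1) * (L / 2 ^ n) ≤ 2 ^ 2 * (δ * log (2 * L / δ)) :=
    calc (n + 1) * (L / 2 ^ n) ≤ (n + 1) * (2 * δ) := mul_le_mul_of_nonneg_left h₂ (by positivity)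
      _ ≤ 2 * log (2 * L / δ) * (2 * δ) := mul_le_mul_of_nonneg_right hn (by positivity)
      _ = 2 ^ 2 * (δ * log (2 * L / δ)) := by ring
  calc levyScale L n ≤ √(2 ^ 2 * (δ * log (2 * L / δ))) := Real.sqrt_le_sqrt hsq
    _ = 2 * √(δ * log (2 * L / δ)) := by
        rw [Real.sqrt_mul (by norm_num), Real.sqrt_sq zero_le_two]

end LevyScale

theorem abs_sub_le_of_dyadic_increments {a b s t M : ℝ} {f : ℝ → ℝ} (hab : a < b)
    (hf : ContinuousOn f (Set.Icc a b)) (hM : 0 ≤ M)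
    (H : ∀ n, ∀ k < 2 ^ n,
      |f (dyadicPoint a b n (k + 1)) - f (dyadicPoint a b n k)| ≤ M * levyScale (b - a) n)
    (hs : s ∈ Set.Icc a b) (ht : t ∈ Set.Icc a b) (hst : s ≠ t) :
    |f t - f s| ≤ 54 * M * √(|t - s| * log (2 * (b - a) / |t - s|)) := by
  wlog hlt : s < t generalizing s t
  · rw [abs_sub_comm, abs_sub_comm t]
    exact this ht hs hst.symm (hst.lt_or_gt.resolve_left hlt)
  rw [abs_of_pos (sub_pos.2 hlt)]
  have hδ : 0 < t - s := sub_pos.2 hlt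
  obtain ⟨n, hn₁, hn₂⟩ := exists_nat_pow_near (x := (b - a) / (t - s))
    ((one_le_div hδ).2 (by linarith [ht.2, hs.1])) one_lt_two
  have h₁ : t - s ≤ (b - a) / 2 ^ n := by
    rw [le_div_iff₀ hδ] at hn₁; rw [le_div_iff₀ (by positivity)]; linarith
  have h₂ : (b - a) / 2 ^ n ≤ 2 * (t - s) := by
    rw [div_lt_iff₀ hδ, pow_succ] at hn₂; rw [div_le_iff₀ (by positivity)]; linarith
  have htail {x : ℝ} (hx : x ∈ Set.Icc a b) :
      |f x - f (dyadicApprox a b n x)| ≤ 13 * M * levyScale (b - a) n := by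
    refine abs_sub_dyadicApprox_le hab hf H hx n fun J ↦ ?_
    rw [← mul_sum, mul_comm 13 M, mul_assoc]
    exact mul_le_mul_of_nonneg_left (sum_levyScale_le (sub_nonneg.2 hab.le) n J) hM
  have hmid := abs_dyadicApprox_sub_dyadicApprox_le hab H ht.2 hlt.le h₁
  have htri₁ := abs_sub_le (f t) (f (dyadicApprox a b n t)) (f s)
  have htri₂ := abs_sub_le (f (dyadicApprox a b n t)) (f (dyadicApprox a b n s)) (f s)
  rw [abs_sub_comm (f (dyadicApprox a b n s))] at htri₂
  calc |f t - f s| ≤ 27 * M * levyScale (b - a) n := by linarith [htail ht, htail hs]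
    _ ≤ 27 * M * (2 * √((t - s) * log (2 * (b - a) / (t - s)))) := by
        gcongr; exact levyScale_le hδ h₁ h₂
    _ = 54 * M * √((t - s) * log (2 * (b - a) / (t - s))) := by ring

noncomputable def gaussianTailBound (K : ℝ) : ℝ := √(exp 1) * K * exp (-K ^ 2 / 2)

lemma mul_exp_neg_sq_div_two_le (x : ℝ) : x * exp (-x ^ 2 / 2) ≤ exp (-x ^ 2 / 4) := by
  have hx : x ≤ exp (x ^ 2 / 4) := by
    nlinarith [Real.add_one_le_exp (x ^ 2 / 4), sq_nonneg (x - 2)]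
  calc x * exp (-x ^ 2 / 2) ≤ exp (x ^ 2 / 4) * exp (-x ^ 2 / 2) :=
        mul_le_mul_of_nonneg_right hx (Real.exp_pos _).le
    _ = exp (-x ^ 2 / 4) := by rw [← Real.exp_add]; ring_nf

lemma two_pow_mul_gaussianTailBound_le {c : ℝ} (hc : 4 ≤ c) (n : ℕ) :
    2 ^ n * gaussianTailBound (c * √(n + 1)) ≤ exp 2 * exp (-c ^ 2 / 8) / 2 / 2 ^ n := by
  have hsq : (c * √(n + 1)) ^ 2 = c ^ 2 * (n + 1) := by
    rw [mul_pow, Real.sq_sqrt (by positivity)]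
  have htwo : (2 : ℝ) ≤ Real.exp 1 := by linarith [Real.add_one_le_exp 1]
  have hpow : (2 : ℝ) ^ (2 * n + 1) ≤ exp (2 * n + 1) := by
    rw [show (2 * n + 1 : ℝ) = ((2 * n + 1 : ℕ) : ℝ) * 1 by push_cast; ring, Real.exp_nat_mul]
    exact pow_le_pow_left₀ zero_le_two htwo _
  have hn : (0 : ℝ) ≤ n := Nat.cast_nonneg n
  calc 2 ^ n * gaussianTailBound (c * √(n + 1))
      ≤ 2 ^ n * (exp (1 / 2) * exp (-(c * √(n + 1)) ^ 2 / 4)) := by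
        rw [gaussianTailBound, mul_assoc, ← Real.exp_half]
        gcongr
        exact mul_exp_neg_sq_div_two_le _
    _ = exp (1 / 2 - c ^ 2 * (n + 1) / 4) * 2 ^ (2 * n + 1) / 2 / 2 ^ n := by
        rw [hsq, ← Real.exp_add, pow_succ, two_mul, pow_add]; field_simp; ring_nf
    _ ≤ exp (1 / 2 - c ^ 2 * (n + 1) / 4) * exp (2 * n + 1) / 2 / 2 ^ n := by
        gcongr
    _ ≤ exp 2 * exp (-c ^ 2 / 8) / 2 / 2 ^ n := by
        have hc2 : 16 ≤ c ^ 2 := by nlinarith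
        rw [← Real.exp_add, ← Real.exp_add]
        gcongr ?_ / _ / _
        exact Real.exp_le_exp.2 (by nlinarith [mul_le_mul_of_nonneg_right hc2 hn])

lemma tsum_two_pow_mul_gaussianTailBound_le {c : ℝ} (hc : 4 ≤ c) :
    ∑' n : ℕ, ENNReal.ofReal (2 ^ n * gaussianTailBound (c * √(n + 1))) ≤
      ENNReal.ofReal (exp 2 * exp (-c ^ 2 / 8)) := by
  set C := exp 2 * exp (-c ^ 2 / 8)
  calc ∑' n : ℕ, ENNReal.ofReal (2 ^ n * gaussianTailBound (c * √(n + 1)))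
      ≤ ∑' n : ℕ, ENNReal.ofReal (C / 2 / 2 ^ n) :=
        ENNReal.tsum_le_tsum fun n ↦
          ENNReal.ofReal_le_ofReal (two_pow_mul_gaussianTailBound_le hc n)
    _ = ENNReal.ofReal C := by
        rw [← ENNReal.ofReal_tsum_of_nonneg (fun n ↦ by positivity) (summable_geometric_two' C),
          tsum_geometric_two']

lemma setOf_lt_abs_sub_subset_iUnion_dyadic {Ω : Type*} {a b c : ℝ} {Z : Ω → ℝ → ℝ} (hab : a < b)
    (hc : 0 ≤ c) (hZ : ∀ ω, ContinuousOn (Z ω) (Set.Icc a b)) :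
    {ω | ∃ t ∈ Set.Icc a b, ∃ s ∈ Set.Icc a b, t ≠ s ∧
        54 * c * √(|t - s| * log (2 * (b - a) / |t - s|)) < |Z ω t - Z ω s|} ⊆
      ⋃ n : ℕ, ⋃ k ∈ range (2 ^ n), {ω | c * √(n + 1) *
          |dyadicPoint a b n (k + 1) - dyadicPoint a b n k| ^ ((1 : ℝ) / 2) <
        |Z ω (dyadicPoint a b n (k + 1)) - Z ω (dyadicPoint a b n k)|} := by
  rintro ω ⟨t, ht, s, hs, hts, hlt⟩
  by_contra hω
  simp only [Set.mem_iUnion, Set.mem_ofPred_eq, mem_range, not_exists, not_lt] at hω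
  refine (abs_sub_le_of_dyadic_increments hab (hZ ω) hc (fun n k hk ↦ ?_) hs ht hts.symm).not_gt hlt
  have hh : 0 < (b - a) / 2 ^ n := div_pos (sub_pos.2 hab) (pow_pos two_pos n)
  have := hω n k hk
  rwa [dyadicPoint_succ_sub, abs_of_pos hh, ← Real.sqrt_eq_rpow, mul_assoc,
    ← Real.sqrt_mul (by positivity)] at this

lemma sum_measure_dyadic_increment_le {Ω : Type*} [MeasurableSpace Ω] {P : Measure Ω}
    {a b : ℝ} {Z : Ω → ℝ → ℝ} (g : ℝ → ℝ) (hab : a ≤ b)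
    (htail : ∀ s ∈ Set.Icc a b, ∀ t ∈ Set.Icc a b, ∀ K : ℝ, 1 ≤ K →
      P {ω | K * |t - s| ^ ((1 : ℝ) / 2) < |Z ω t - Z ω s|} ≤ ENNReal.ofReal (g K))
    {K : ℝ} (hK : 1 ≤ K) (n : ℕ) :
    ∑ k ∈ range (2 ^ n), P {ω | K *
        |dyadicPoint a b n (k + 1) - dyadicPoint a b n k| ^ ((1 : ℝ) / 2) <
        |Z ω (dyadicPoint a b n (k + 1)) - Z ω (dyadicPoint a b n k)|} ≤
      ENNReal.ofReal (2 ^ n * g K) := by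
  calc _ ≤ ∑ k ∈ range (2 ^ n), ENNReal.ofReal (g K) :=
        sum_le_sum fun k hk ↦ htail _ (dyadicPoint_mem_Icc hab (mem_range.1 hk).le) _
          (dyadicPoint_mem_Icc hab (mem_range.1 hk)) _ hK
    _ = _ := by
        rw [sum_const, card_range, nsmul_eq_mul, ENNReal.ofReal_mul (by positivity),
          ENNReal.ofReal_pow zero_le_two, ENNReal.ofReal_ofNat, Nat.cast_pow, Nat.cast_ofNat]

/-- A modulus of continuity estimate (à la Dauvergne–Virág): there are universal
constants `C₁, C₂ > 0` such that any random continuous function `Z` on `[a,b]` whose two-point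
increments satisfy the Gaussian-type tail bound
`P(|Z(t) − Z(s)| > K|t−s|^{1/2}) ≤ √e·K·e^{−K²/2}` for `K ≥ 1` satisfies
`P(sup_{t≠s} |Z(t) − Z(s)|/√(|t−s| log(2(b−a)/|t−s|)) > K) ≤ C₁ e^{−C₂K²}` for all `K ≥ 0`. -/
theorem modulus_of_continuity_from_tail_bound :
    ∃ C₁ C₂ : ℝ, 0 < C₁ ∧ 0 < C₂ ∧
      ∀ (Ω : Type) [MeasurableSpace Ω] (P : Measure Ω), IsProbabilityMeasure P →
      ∀ a b : ℝ, a < b →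
      ∀ Z : Ω → ℝ → ℝ,
        (∀ ω, ContinuousOn (Z ω) (Set.Icc a b)) →
        (∀ t ∈ Set.Icc a b, Measurable (fun ω => Z ω t)) →
        (∀ s ∈ Set.Icc a b, ∀ t ∈ Set.Icc a b, ∀ K : ℝ, 1 ≤ K →
          P {ω | K * |t - s| ^ ((1 : ℝ) / 2) < |Z ω t - Z ω s|}
            ≤ ENNReal.ofReal (Real.sqrt (Real.exp 1) * K * Real.exp (-K ^ 2 / 2))) →
        ∀ K : ℝ, 0 ≤ K →
          P {ω | ∃ t ∈ Set.Icc a b, ∃ s ∈ Set.Icc a b, t ≠ s ∧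
                K * Real.sqrt (|t - s| * Real.log (2 * (b - a) / |t - s|))
                  < |Z ω t - Z ω s|}
            ≤ ENNReal.ofReal (C₁ * Real.exp (-C₂ * K ^ 2)) := by
  refine ⟨exp 2, 1 / (8 * 54 ^ 2), Real.exp_pos 2, by positivity, ?_⟩
  intro Ω _ P _ a b hab Z hZ _ htail K hK₀
  obtain ⟨c, rfl⟩ : ∃ c, K = 54 * c := ⟨K / 54, by ring⟩
  rw [show -(1 / (8 * 54 ^ 2)) * (54 * c) ^ 2 = -c ^ 2 / 8 by ring]
  rcases lt_or_ge c 4 with hc | hc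
  · refine prob_le_one.trans (ENNReal.one_le_ofReal.2 ?_)
    rw [← Real.exp_add]
    exact Real.one_le_exp (by nlinarith)
  have hKₙ (n : ℕ) : 1 ≤ c * √(n + 1) := by
    nlinarith [Real.one_le_sqrt.2 (by simp : (1 : ℝ) ≤ n + 1)]
  calc _ ≤ _ := measure_mono (setOf_lt_abs_sub_subset_iUnion_dyadic hab (by linarith) hZ)
    _ ≤ ∑' n : ℕ, ∑ k ∈ range (2 ^ n), P _ :=
        (measure_iUnion_le _).trans (ENNReal.tsum_le_tsum fun n ↦ measure_biUnion_finset_le _ _)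
    _ ≤ ∑' n : ℕ, ENNReal.ofReal (2 ^ n * gaussianTailBound (c * √(n + 1))) :=
        ENNReal.tsum_le_tsum fun n ↦
          sum_measure_dyadic_increment_le gaussianTailBound hab.le htail (hKₙ n) n
    _ ≤ _ := tsum_two_pow_mul_gaussianTailBound_le hc
end
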